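/- Let r = (r_1, …, r_{m+1}) be a finite sequence of real numbers with m ≥ 2, let p = R(r_1, …, r_m) be the relative order of its first m entries and q = R(r_2, …, r_{m+1}) the relative order of its last m entries. Then suffixop(p) = prefixop(q), and both are equal to R(r_2, …, r_m). (This is the necessary overlap condition underlying the completeness of pattern fusion.) -/
import Mathlib


/-- The rank of the `i`-th entry of a finite sequence `a`:
`rank_a(a_i) = 1 + |{j : a_j < a_i}|`. -/
noncomputable def rankOf {α : Type*} [LinearOrder α] {m : ℕ} (a : Fin m → α) (i : Fin m) : ℕ :=
  1 + (Finset.univ.filter fun j => a j < a i).card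

/-- The relative order `R(a) = (rank_a(a_1), …, rank_a(a_m))`. -/
noncomputable def relOrder {α : Type*} [LinearOrder α] {m : ℕ} (a : Fin m → α) : Fin m → ℕ :=
  fun i => rankOf a i

lemma relOrder_lt_iff {α : Type*} [LinearOrder α] {m : ℕ} (a : Fin m → α) (i j : Fin m) :
    relOrder a i < relOrder a j ↔ a i < a j := by
  constructor
  · intro h
    by_contra hn
    push_neg at hn
    have : (Finset.univ.filter fun k => a k < a j) ⊆
        (Finset.univ.filter fun k => a k < a i) := by
      intro k hk
      simp only [Finset.mem_filter, Finset.mem_univ, true_and] at hk ⊢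
      exact lt_of_lt_of_le hk hn
    have := Finset.card_le_card this
    simp only [relOrder, rankOf] at h
    omega
  · intro h
    have hss : (Finset.univ.filter fun k => a k < a i) ⊂
        (Finset.univ.filter fun k => a k < a j) := by
      constructor
      · intro k hk
        simp only [Finset.mem_filter, Finset.mem_univ, true_and] at hk ⊢
        exact hk.trans h
      · intro hsub
        have hi : i ∈ (Finset.univ.filter fun k => a k < a j) := by
          simp [h]
        have := hsub hi
        simp at this
    have := Finset.card_lt_card hss
    simp only [relOrder, rankOf]
    omega

lemma relOrder_congr {α β : Type*} [LinearOrder α] [LinearOrder β] {m : ℕ}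
    (a : Fin m → α) (b : Fin m → β)
    (h : ∀ i j, a i < a j ↔ b i < b j) : relOrder a = relOrder b := by
  funext i
  simp only [relOrder, rankOf]
  congr 1
  apply Finset.card_bij (fun j _ => j) <;> intro j hj <;>
    simp only [Finset.mem_filter, Finset.mem_univ, true_and] at *
  · exact (h j i).mp hj
  · intro k hk; exact fun h' => h'
  · exact ⟨j, (h j i).mpr hj, rfl⟩

/-- For a sequence `r = (r_1, …, r_{m+1})` with `m ≥ 2`, letting
`p = R(r_1, …, r_m)` and `q = R(r_2, …, r_{m+1})`, we have
`suffixop(p) = prefixop(q)` and both equal `R(r_2, …, r_m)`. -/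
theorem suffixop_prefix_eq_prefixop_suffix {m : ℕ} (hm : 2 ≤ m) (r : Fin (m + 1) → ℝ)
    (p q : Fin m → ℕ)
    (hp : p = relOrder (fun i : Fin m => r ⟨i.val, by have := i.isLt; omega⟩))
    (hq : q = relOrder (fun i : Fin m => r ⟨i.val + 1, by have := i.isLt; omega⟩)) :
    relOrder (fun i : Fin (m - 1) => p ⟨i.val + 1, by have := i.isLt; omega⟩) =
      relOrder (fun i : Fin (m - 1) => q ⟨i.val, by have := i.isLt; omega⟩) ∧
    relOrder (fun i : Fin (m - 1) => p ⟨i.val + 1, by have := i.isLt; omega⟩) =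
      relOrder (fun i : Fin (m - 1) => r ⟨i.val + 1, by have := i.isLt; omega⟩) := by
  have hP : relOrder (fun i : Fin (m - 1) => p ⟨i.val + 1, by have := i.isLt; omega⟩) =
      relOrder (fun i : Fin (m - 1) => r ⟨i.val + 1, by have := i.isLt; omega⟩) := by
    apply relOrder_congr
    intro i j
    subst hp
    exact relOrder_lt_iff _ _ _
  have hQ : relOrder (fun i : Fin (m - 1) => q ⟨i.val, by have := i.isLt; omega⟩) =
      relOrder (fun i : Fin (m - 1) => r ⟨i.val + 1, by have := i.isLt; omega⟩) := by
    apply relOrder_congr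
    intro i j
    subst hq
    exact relOrder_lt_iff _ _ _
  exact ⟨hP.trans hQ.symm, hP⟩
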